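/- arXiv:2505.14856 — 3 statements merged into one kernel-verified Lean document; each statement's English description precedes it below -/
import Mathlib

section
/- Let M > 0, L > 0 and let E be a real number with -M²/(2L) < E < 0, and let r₋ = (-M + √(M² + 2EL))/(2E) and r₊ = (-M - √(M² + 2EL))/(2E) be the turning points, so 0 < r₋ < r₊ and Ψ⁰_L(r_±) = E. Then the function r ↦ (2E - 2Ψ⁰_L(r))^{-1/2} is integrable on the interval (r₋, r₊), and the period integral satisfies 2∫_{r₋}^{r₊} (2E - 2Ψ⁰_L(r))^{-1/2} dr = (π/√2)·M·(-E)^{-3/2}. -/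
/-!
Since `r₋ + r₊ = M/(-E)` and `r₋ r₊ = L/(-2E)`, one has
`2E - 2Ψ⁰_L(r) = -2E (r - r₋)(r₊ - r) / r²`, so the integrand is `r / √(-2E (r - r₋)(r₊ - r))`.
With `c = (r₋ + r₊)/2` and `d = (r₊ - r₋)/2`, the substitution `r = c + d sin θ` turns
`(r - r₋)(r₊ - r) = d² - (r - c)²` into `(d cos θ)²`, which cancels the Jacobian `d cos θ`;
what remains is `∫_{-π/2}^{π/2} (c + d sin θ) dθ / √(-2E) = π c / √(-2E)`.
-/

open MeasureTheory Set Real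

lemma image_add_mul_sin_Ioo {c d : ℝ} (hd : 0 < d) :
    (fun θ => c + d * sin θ) '' Ioo (-(π / 2)) (π / 2) = Ioo (c - d) (c + d) := by
  have hsin : sin '' Ioo (-(π / 2)) (π / 2) = Ioo (-1) 1 :=
    sinPartialHomeomorph.image_source_eq_target
  rw [← Function.comp_def (fun x => c + d * x), image_comp, hsin]
  simp_rw [add_comm c]
  rw [image_affine_Ioo hd]
  ring_nf

lemma injOn_add_mul_sin {c d : ℝ} (hd : d ≠ 0) :
    InjOn (fun θ => c + d * sin θ) (Ioo (-(π / 2)) (π / 2)) :=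
  ((add_right_injective c).comp (mul_right_injective₀ hd)).comp_injOn
    (injOn_sin.mono Ioo_subset_Icc_self)

lemma sqrt_sq_sub_sq_sin {d θ : ℝ} (hd : 0 < d) (hθ : θ ∈ Ioo (-(π / 2)) (π / 2)) :
    √(d ^ 2 - (d * sin θ) ^ 2) = d * cos θ := by
  rw [← sqrt_sq (mul_pos hd (cos_pos_of_mem_Ioo hθ)).le]
  congr 1
  linear_combination -d ^ 2 * sin_sq_add_cos_sq θ

theorem integrableOn_div_sqrt_sq_sub_sq_and_integral_eq {c d : ℝ} (hd : 0 < d) {g : ℝ → ℝ}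
    (hg : Continuous g) :
    IntegrableOn (fun r => g r / √(d ^ 2 - (r - c) ^ 2)) (Ioo (c - d) (c + d)) ∧
      ∫ r in Ioo (c - d) (c + d), g r / √(d ^ 2 - (r - c) ^ 2) =
        ∫ θ in -(π / 2)..π / 2, g (c + d * sin θ) := by
  have hderiv : ∀ θ ∈ Ioo (-(π / 2)) (π / 2), HasDerivWithinAt (fun θ => c + d * sin θ)
      (d * cos θ) (Ioo (-(π / 2)) (π / 2)) θ :=
    fun θ _ => (((hasDerivAt_sin θ).const_mul d).const_add c).hasDerivWithinAt
  have hpull : EqOn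
      (fun θ => |d * cos θ| • (g (c + d * sin θ) / √(d ^ 2 - (c + d * sin θ - c) ^ 2)))
      (fun θ => g (c + d * sin θ)) (Ioo (-(π / 2)) (π / 2)) := by
    intro θ hθ
    have hcos : 0 < d * cos θ := mul_pos hd (cos_pos_of_mem_Ioo hθ)
    simp only [add_sub_cancel_left, sqrt_sq_sub_sq_sin hd hθ, smul_eq_mul, abs_of_pos hcos]
    exact mul_div_cancel₀ _ hcos.ne'
  rw [← image_add_mul_sin_Ioo hd, integrableOn_image_iff_integrableOn_abs_deriv_smul
      measurableSet_Ioo hderiv (injOn_add_mul_sin hd.ne'),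
    integral_image_eq_integral_abs_deriv_smul measurableSet_Ioo hderiv (injOn_add_mul_sin hd.ne'),
    setIntegral_congr_fun measurableSet_Ioo hpull, integrableOn_congr_fun hpull measurableSet_Ioo,
    intervalIntegral.integral_of_le (by linarith [pi_pos]), integral_Ioc_eq_integral_Ioo]
  exact ⟨(by fun_prop : Continuous fun θ => g (c + d * sin θ)).integrableOn_Icc.mono_set
    Ioo_subset_Icc_self, rfl⟩

lemma integral_add_mul_sin_neg_pi_div_two_pi_div_two (c d : ℝ) :
    ∫ θ in -(π / 2)..π / 2, c + d * sin θ = π * c := by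
  rw [intervalIntegral.integral_add intervalIntegrable_const
      ((continuous_sin.intervalIntegrable _ _).const_mul d),
    intervalIntegral.integral_const_mul, integral_sin, intervalIntegral.integral_const]
  simp [cos_neg]

lemma rpow_neg_half_mul_div_sq {A q r : ℝ} (hA : 0 < A) (hq : 0 < q) (hr : 0 < r) :
    (A * q / r ^ 2) ^ (-(1 / 2) : ℝ) = r / √A / √q := by
  rw [rpow_neg (by positivity), ← sqrt_eq_rpow, sqrt_div' _ (sq_nonneg r), sqrt_sq hr.le,
    sqrt_mul hA.le, inv_div, div_div]

lemma rpow_neg_three_halves {x : ℝ} (hx : 0 < x) : x ^ (-(3 / 2) : ℝ) = (x * √x)⁻¹ := by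
  rw [rpow_neg hx.le, show (3 / 2 : ℝ) = 1 + 1 / 2 by norm_num, rpow_add hx, rpow_one,
    ← sqrt_eq_rpow]

section Kepler

variable {M L E : ℝ}

lemma kepler_discriminant_pos (hL : 0 < L) (hE : -M ^ 2 / (2 * L) < E) :
    0 < M ^ 2 + 2 * E * L := by
  linarith [(div_lt_iff₀ (by positivity)).1 hE]

lemma sqrt_kepler_discriminant_lt (hM : 0 < M) (hL : 0 < L) (hE : E < 0) :
    √(M ^ 2 + 2 * E * L) < M := by
  rw [sqrt_lt' hM]
  nlinarith

lemma two_mul_sub_two_mul_kepler_potential {s r : ℝ} (hE : E ≠ 0)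
    (hs : s ^ 2 = M ^ 2 + 2 * E * L) (hr : r ≠ 0) :
    2 * E - 2 * (-M / r + L / (2 * r ^ 2)) =
      -(2 * E) * ((s / (2 * -E)) ^ 2 - (r - M / (2 * -E)) ^ 2) / r ^ 2 := by
  field_simp
  linear_combination hs

end Kepler

/-- For the Kepler effective potential `Ψ⁰_L(r) = -M/r + L/(2r²)` and
`-M²/(2L) < E < 0`, with turning points `r₋ < r₊`, the function
`r ↦ (2E - 2Ψ⁰_L(r))^{-1/2}` is integrable on `(r₋, r₊)` and the period integral
satisfies `2∫_{r₋}^{r₊} (2E - 2Ψ⁰_L(r))^{-1/2} dr = (π/√2)·M·(-E)^{-3/2}`. -/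
theorem kepler_period_integral (M L E : ℝ) (hM : 0 < M) (hL : 0 < L)
    (hE₁ : -M ^ 2 / (2 * L) < E) (hE₂ : E < 0) :
    let Ψ : ℝ → ℝ := fun r => -M / r + L / (2 * r ^ 2)
    let rm : ℝ := (-M + Real.sqrt (M ^ 2 + 2 * E * L)) / (2 * E)
    let rp : ℝ := (-M - Real.sqrt (M ^ 2 + 2 * E * L)) / (2 * E)
    IntegrableOn (fun r => (2 * E - 2 * Ψ r) ^ (-(1 / 2) : ℝ)) (Set.Ioo rm rp) volume ∧
    2 * ∫ r in Set.Ioo rm rp, (2 * E - 2 * Ψ r) ^ (-(1 / 2) : ℝ) =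
      Real.pi / Real.sqrt 2 * M * (-E) ^ (-(3 / 2) : ℝ) := by
  intro Ψ rm rp
  have hD := kepler_discriminant_pos hL hE₁
  have hE : 0 < -E := neg_pos.2 hE₂
  set s := √(M ^ 2 + 2 * E * L)
  set c := M / (2 * -E)
  set d := s / (2 * -E)
  have hd : 0 < d := div_pos (sqrt_pos.2 hD) (by positivity)
  have hdc : d < c :=
    div_lt_div_of_pos_right (sqrt_kepler_discriminant_lt hM hL hE₂) (by positivity)
  have hrm : rm = c - d := by simp only [rm, c, d]; field_simp; ring
  have hrp : rp = c + d := by simp only [rp, c, d]; field_simp; ring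
  have hgap : EqOn (fun r => (2 * E - 2 * Ψ r) ^ (-(1 / 2) : ℝ))
      (fun r => r / √(-(2 * E)) / √(d ^ 2 - (r - c) ^ 2)) (Ioo (c - d) (c + d)) := by
    intro r ⟨hr₁, hr₂⟩
    have hr : 0 < r := by linarith
    dsimp only [Ψ]
    rw [two_mul_sub_two_mul_kepler_potential hE₂.ne (sq_sqrt hD.le) hr.ne',
      rpow_neg_half_mul_div_sq (by linarith) (by nlinarith) hr]
  obtain ⟨hint, hval⟩ := integrableOn_div_sqrt_sq_sub_sq_and_integral_eq (c := c) hd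
    (g := fun r => r / √(-(2 * E))) (by fun_prop)
  rw [hrm, hrp]
  refine ⟨(integrableOn_congr_fun hgap measurableSet_Ioo).2 hint, ?_⟩
  rw [setIntegral_congr_fun measurableSet_Ioo hgap, hval, intervalIntegral.integral_div,
    integral_add_mul_sin_neg_pi_div_two_pi_div_two, rpow_neg_three_halves hE,
    show -(2 * E) = 2 * -E by ring, sqrt_mul zero_le_two]
  simp only [c]
  field_simp
end

section
/- Let 0 < ω_min ≤ ω_max, let μ > 0, and let γ ∈ [0,1]. Then there exists C > 0 such that for every nonzero integer m, every real λ with |λ| ≥ 2πω_min, every real ε ≥ 0, and every x ∈ [ω_min, ω_max] satisfying |x + λ/(2πm)| ≥ μω_min, one has |1/(x + (λ + iε)/(2πm)) - 1/(x + (λ - iε)/(2πm))| ≤ C·(ε/|m|)·(|m|/|λ|)^{2γ}. -/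
/-! With `a = x + λ/(2πm)` and `r = ε/(2πm)` the two boundary values are `1/z` and `1/z̄` for
`z = a + ir`, so their difference has modulus `2|r|/|z|² ≤ 2|r|/a²`. Non-resonance gives
`|a| ≥ μ ω_min`, and the triangle inequality gives `|λ|/|m| ≤ 2π (ω_max + |a|)`; together they
yield `1 + |λ|/|m| ≤ K |a|` with `K` depending only on `μ, ω_min, ω_max`, which absorbs
`(|λ|/|m|)^{2γ} ≤ (1 + |λ|/|m|)²` since `2γ ≤ 2`. -/

open Real ComplexConjugate

theorem Complex.norm_inv_sub_inv_conj (z : ℂ) :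
    ‖z⁻¹ - (conj z)⁻¹‖ = 2 * |z.im| / Complex.normSq z := by
  rw [Complex.inv_def, Complex.inv_def, Complex.conj_conj, Complex.normSq_conj, ← sub_mul,
    norm_mul, norm_sub_rev, Complex.sub_conj, norm_mul, Complex.norm_I, Complex.norm_real,
    Complex.norm_real, Real.norm_eq_abs, Real.norm_eq_abs, abs_inv,
    abs_of_nonneg (Complex.normSq_nonneg z), abs_mul, abs_two, mul_one, div_eq_mul_inv]

theorem Complex.norm_inv_sub_inv_conj_le {z : ℂ} (hz : z.re ≠ 0) :
    ‖z⁻¹ - (conj z)⁻¹‖ ≤ 2 * |z.im| / z.re ^ 2 := by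
  rw [Complex.norm_inv_sub_inv_conj, sq]
  gcongr
  · exact mul_self_pos.mpr hz
  · exact Complex.re_sq_le_normSq z

theorem rpow_le_one_add_sq {T p : ℝ} (hT : 0 ≤ T) (hp0 : 0 ≤ p) (hp2 : p ≤ 2) :
    T ^ p ≤ (1 + T) ^ 2 :=
  calc T ^ p ≤ (1 + T) ^ p := by gcongr; linarith
    _ ≤ (1 + T) ^ (2 : ℝ) := Real.rpow_le_rpow_of_exponent_le (by linarith) hp2
    _ = (1 + T) ^ 2 := Real.rpow_two _

theorem one_add_le_mul_of_le_mul_add {δ A b c T : ℝ} (hδ : 0 < δ) (hA : δ ≤ A) (hb : 0 ≤ b)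
    (hc : 0 ≤ c) (hT : T ≤ c * (b + A)) : 1 + T ≤ ((1 + c * b) / δ + c) * A := by
  have : 1 + c * b ≤ (1 + c * b) / δ * A := by
    rw [div_mul_eq_mul_div, le_div_iff₀ hδ]
    gcongr
  linarith

theorem abs_div_abs_le_two_pi_mul {lam x b m : ℝ} (hm : m ≠ 0) (hx : |x| ≤ b) :
    |lam| / |m| ≤ 2 * π * (b + |x + lam / (2 * π * m)|) := by
  have hsplit : |lam| / |m| = 2 * π * |lam / (2 * π * m)| := by
    rw [abs_div, abs_mul, abs_of_pos (by positivity : (0 : ℝ) < 2 * π)]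
    field_simp
  have htri : |lam / (2 * π * m)| ≤ |x + lam / (2 * π * m)| + |x| := by
    simpa using abs_sub (x + lam / (2 * π * m)) x
  rw [hsplit]
  gcongr
  linarith

theorem div_sq_le_mul_rpow {a ε M L K p : ℝ} (hM : 0 < M) (hL : 0 < L) (ha : a ≠ 0)
    (hε : 0 ≤ ε) (h : (L / M) ^ p ≤ K ^ 2 * a ^ 2) :
    2 * (ε / (2 * π * M)) / a ^ 2 ≤ K ^ 2 / π * (ε / M) * (M / L) ^ p := by
  have hP : 0 < (L / M) ^ p := by positivity
  rw [← inv_div L M, Real.inv_rpow (by positivity)]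
  calc 2 * (ε / (2 * π * M)) / a ^ 2 = ε / (π * M) * (1 / a ^ 2) := by field_simp
    _ ≤ ε / (π * M) * (K ^ 2 / (L / M) ^ p) := by
        gcongr ε / (π * M) * ?_
        rw [div_le_div_iff₀ (by positivity) hP]
        linarith
    _ = K ^ 2 / π * (ε / M) * ((L / M) ^ p)⁻¹ := by field_simp

theorem Complex.ofReal_add_add_I_mul_div_ofReal (x y ε d : ℝ) :
    (x : ℂ) + (y + I * ε) / d = ⟨x + y / d, ε / d⟩ := by
  apply Complex.ext <;> simp [Complex.div_ofReal_re, Complex.div_ofReal_im]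

theorem Complex.ofReal_add_sub_I_mul_div_ofReal (x y ε d : ℝ) :
    (x : ℂ) + (y - I * ε) / d = conj ⟨x + y / d, ε / d⟩ := by
  apply Complex.ext <;> simp [Complex.div_ofReal_re, Complex.div_ofReal_im, neg_div]

/-- Non-resonant bound on the difference of the two boundary values of
the resolvent: for `0 < ω_min ≤ ω_max`, `μ > 0`, `γ ∈ [0,1]`, there is `C > 0` such
that for all nonzero `m`, all `λ` with `|λ| ≥ 2πω_min`, all `ε ≥ 0`, and all
`x ∈ [ω_min, ω_max]` with `|x + λ/(2πm)| ≥ μω_min`,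
`|1/(x + (λ+iε)/(2πm)) - 1/(x + (λ-iε)/(2πm))| ≤ C·(ε/|m|)·(|m|/|λ|)^{2γ}`. -/
theorem nonresonant_difference_bound (ωmin ωmax : ℝ) (h0 : 0 < ωmin) (h1 : ωmin ≤ ωmax)
    (μ : ℝ) (hμ : 0 < μ) (γ : ℝ) (hγ0 : 0 ≤ γ) (hγ1 : γ ≤ 1) :
    ∃ C > 0, ∀ m : ℤ, m ≠ 0 → ∀ lam : ℝ, 2 * Real.pi * ωmin ≤ |lam| →
      ∀ ε : ℝ, 0 ≤ ε → ∀ x ∈ Set.Icc ωmin ωmax,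
        μ * ωmin ≤ |x + lam / (2 * Real.pi * (m : ℝ))| →
          ‖(1 / ((x : ℂ) + ((lam : ℂ) + Complex.I * (ε : ℂ)) / (2 * (Real.pi : ℂ) * (m : ℂ))) -
                1 / ((x : ℂ) + ((lam : ℂ) - Complex.I * (ε : ℂ)) / (2 * (Real.pi : ℂ) * (m : ℂ))))‖ ≤
            C * (ε / |(m : ℝ)|) * (|(m : ℝ)| / |lam|) ^ (2 * γ) := by
  have hωmax : 0 ≤ ωmax := h0.le.trans h1
  set K := (1 + 2 * π * ωmax) / (μ * ωmin) + 2 * π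
  refine ⟨K ^ 2 / π, by positivity, ?_⟩
  intro m hm lam hlam ε hε x hx hres
  have hm' : (m : ℝ) ≠ 0 := Int.cast_ne_zero.mpr hm
  have hlam_pos : 0 < |lam| := lt_of_lt_of_le (by positivity) hlam
  set a := x + lam / (2 * π * m)
  have ha : a ≠ 0 := abs_pos.mp (lt_of_lt_of_le (by positivity) hres)
  have hT : |lam| / |(m : ℝ)| ≤ 2 * π * (ωmax + |a|) :=
    abs_div_abs_le_two_pi_mul hm' (abs_le.mpr ⟨by linarith [hx.1], hx.2⟩)
  have hkey : (|lam| / |(m : ℝ)|) ^ (2 * γ) ≤ K ^ 2 * a ^ 2 :=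
    calc _ ≤ (1 + |lam| / |(m : ℝ)|) ^ 2 :=
          rpow_le_one_add_sq (by positivity) (by linarith) (by linarith)
      _ ≤ (K * |a|) ^ 2 := by
          gcongr
          exact one_add_le_mul_of_le_mul_add (by positivity) hres hωmax (by positivity) hT
      _ = _ := by rw [mul_pow, sq_abs]
  have hD : 2 * (π : ℂ) * (m : ℂ) = ((2 * π * m : ℝ) : ℂ) := by push_cast; rfl
  rw [hD, Complex.ofReal_add_add_I_mul_div_ofReal, Complex.ofReal_add_sub_I_mul_div_ofReal,
    one_div, one_div]
  calc _ ≤ 2 * |ε / (2 * π * m)| / a ^ 2 := Complex.norm_inv_sub_inv_conj_le ha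
    _ = 2 * (ε / (2 * π * |(m : ℝ)|)) / a ^ 2 := by
        rw [abs_div, abs_mul, abs_of_nonneg hε, abs_of_pos (by positivity : (0 : ℝ) < 2 * π)]
    _ ≤ _ := div_sq_le_mul_rpow (abs_pos.mpr hm') hlam_pos ha hε hkey
end

section
/- Let M > 0, let U : (0,∞) → ℝ be differentiable, define Ψ(L,R) = U(R) - M/R + L/(2R²), and let ω : ℝ² → ℝ be differentiable. Let O ⊆ (0,∞) × ℝ² be open and let E, L : O → ℝ be differentiable functions satisfying, for every (R,y,z) ∈ O, the constraints ω(E(R,y,z), L(R,y,z)) = y and E(R,y,z) - Ψ(L(R,y,z), R) = z. Assume also that the gradient (∂_Eω, ∂_Lω) of ω is nonzero at (E(R,y,z), L(R,y,z)) for every (R,y,z) ∈ O. Then for every differentiable F : ℝ² → ℝ and every (R,y,z) ∈ O, the partial derivatives of the composition G(R,y,z) := F(E(R,y,z), L(R,y,z)) satisfy ∂_R G(R,y,z) = ∂_RΨ(L(R,y,z), R) · ∂_z G(R,y,z), where ∂_RΨ(L,R) = U'(R) + M/R² - L/R³. -/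
/-!
Write `Φ(R, E, L) = (R, ω(E, L), E - Ψ_L(R))`. The constraints say that `Φ` is a left inverse of
`χ(R, y, z) = (R, E, L)` near `p`, so `DΦ ∘ Dχ = id` by the chain rule, and in finite dimension
also `Dχ ∘ DΦ = id`. Since `DΦ ∂_R = ∂_R - Ψ_L'(R) ∂_z`, the pair `(E, L)` has zero derivative
along `∂_R - Ψ_L'(R) ∂_z`, and hence so does every `F(E, L)`.
-/

open Filter Topology

theorem HasFDerivAt.comp_eq_id_of_eventually_leftInverse {𝕜 X : Type*}
    [NontriviallyNormedField 𝕜] [NormedAddCommGroup X] [NormedSpace 𝕜 X] [FiniteDimensional 𝕜 X]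
    {Φ χ : X → X} {Φ' χ' : X →L[𝕜] X} {p : X}
    (hΦ : HasFDerivAt Φ Φ' (χ p)) (hχ : HasFDerivAt χ χ' p) (hinv : ∀ᶠ q in 𝓝 p, Φ (χ q) = q) :
    χ' ∘L Φ' = .id 𝕜 X := by
  have hid : Φ' ∘L χ' = .id 𝕜 X :=
    ((hΦ.comp p hχ).congr_of_eventuallyEq (hinv.mono fun _ h => h.symm)).unique (hasFDerivAt_id p)
  exact ContinuousLinearMap.coe_injective <|
    (LinearMap.comp_eq_id_comm _ _).mp (congrArg ContinuousLinearMap.toLinearMap hid)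

theorem HasFDerivAt.apply_inl_eq_of_hasDerivAt {F Y : Type*} [NormedAddCommGroup F]
    [NormedSpace ℝ F] [NormedAddCommGroup Y] [NormedSpace ℝ Y] {f : ℝ × Y → F}
    {f' : ℝ × Y →L[ℝ] F} {r : ℝ} {y : Y} {v : F}
    (hf : HasFDerivAt f f' (r, y)) (hv : HasDerivAt (fun s => f (s, y)) v r) : f' (1, 0) = v :=
  (hf.comp_hasDerivAt r ((hasDerivAt_id r).prodMk (hasDerivAt_const r y))).unique hv

noncomputable def effectivePotential (M : ℝ) (U : ℝ → ℝ) (L R : ℝ) : ℝ :=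
  U R - M / R + L / (2 * R ^ 2)

theorem hasDerivAt_effectivePotential {M : ℝ} {U : ℝ → ℝ} {U' : ℝ} {R : ℝ} (L : ℝ)
    (hU : HasDerivAt U U' R) (hR : R ≠ 0) :
    HasDerivAt (effectivePotential M U L) (U' + M / R ^ 2 - L / R ^ 3) R := by
  have := (hU.sub ((hasDerivAt_const R M).div (hasDerivAt_id' R) hR)).add
    ((hasDerivAt_const R L).div ((hasDerivAt_pow 2 R).const_mul 2) (by positivity))
  refine this.congr_deriv ?_
  field_simp
  ring

noncomputable def actionCoordinates (M : ℝ) (U : ℝ → ℝ) (ω : ℝ × ℝ → ℝ) (x : ℝ × ℝ × ℝ) :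
    ℝ × ℝ × ℝ :=
  (x.1, ω x.2, x.2.1 - effectivePotential M U x.2.2 x.1)

theorem differentiableAt_actionCoordinates {M : ℝ} {U : ℝ → ℝ} {ω : ℝ × ℝ → ℝ} {x : ℝ × ℝ × ℝ}
    (hU : DifferentiableAt ℝ U x.1) (hω : DifferentiableAt ℝ ω x.2) (hR : x.1 ≠ 0) :
    DifferentiableAt ℝ (actionCoordinates M U ω) x := by
  unfold actionCoordinates effectivePotential
  fun_prop (disch := simp [hR])

theorem fderiv_actionCoordinates_apply_inl {M : ℝ} {U : ℝ → ℝ} {U' : ℝ} {ω : ℝ × ℝ → ℝ}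
    {x : ℝ × ℝ × ℝ} (hU : HasDerivAt U U' x.1) (hω : DifferentiableAt ℝ ω x.2) (hR : x.1 ≠ 0) :
    fderiv ℝ (actionCoordinates M U ω) x (1, 0) =
      (1, 0, -(U' + M / x.1 ^ 2 - x.2.2 / x.1 ^ 3)) := by
  refine (differentiableAt_actionCoordinates hU.differentiableAt hω hR).hasFDerivAt
    |>.apply_inl_eq_of_hasDerivAt ?_
  have := (hasDerivAt_id' x.1).prodMk ((hasDerivAt_const x.1 (ω x.2)).prodMk
    ((hasDerivAt_const x.1 x.2.1).sub (hasDerivAt_effectivePotential (M := M) x.2.2 hU hR)))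
  simpa [actionCoordinates] using this

theorem dR_dz_derivatives_parallel_general (M : ℝ) (U U' : ℝ → ℝ)
    (hU : ∀ r > 0, HasDerivAt U (U' r) r)
    (ω : ℝ × ℝ → ℝ) (hω : Differentiable ℝ ω)
    (O : Set (ℝ × ℝ × ℝ)) (hO : IsOpen O) (hpos : ∀ p ∈ O, 0 < p.1)
    (E L : ℝ × ℝ × ℝ → ℝ)
    (hE : ∀ p ∈ O, DifferentiableAt ℝ E p) (hL : ∀ p ∈ O, DifferentiableAt ℝ L p)
    (hc₁ : ∀ p ∈ O, ω (E p, L p) = p.2.1)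
    (hc₂ : ∀ p ∈ O, E p - (U p.1 - M / p.1 + L p / (2 * p.1 ^ 2)) = p.2.2) :
    ∀ F : ℝ × ℝ → ℝ, Differentiable ℝ F → ∀ p ∈ O,
      fderiv ℝ (fun q => F (E q, L q)) p (1, 0, 0) =
        (U' p.1 + M / p.1 ^ 2 - L p / p.1 ^ 3) *
          fderiv ℝ (fun q => F (E q, L q)) p (0, 0, 1) := by
  intro F hF p hp
  set c := U' p.1 + M / p.1 ^ 2 - L p / p.1 ^ 3
  have hR := hpos p hp
  have hEL := (hE p hp).hasFDerivAt.prodMk (hL p hp).hasFDerivAt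
  have hinv : ∀ᶠ q in 𝓝 p, actionCoordinates M U ω (q.1, E q, L q) = q :=
    eventually_of_mem (hO.mem_nhds hp) fun q hq => Prod.ext rfl (Prod.ext (hc₁ q hq) (hc₂ q hq))
  have hΦ := (differentiableAt_actionCoordinates (M := M) (x := (p.1, E p, L p))
    (hU _ hR).differentiableAt hω.differentiableAt hR.ne').hasFDerivAt
  have hDχ_DΦ := congr($(hΦ.comp_eq_id_of_eventually_leftInverse
    (hasFDerivAt_fst.prodMk hEL) hinv) (1, 0))
  rw [ContinuousLinearMap.comp_apply, fderiv_actionCoordinates_apply_inl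
    (x := (p.1, E p, L p)) (hU _ hR) hω.differentiableAt hR.ne'] at hDχ_DΦ
  have hker : (fderiv ℝ E p).prod (fderiv ℝ L p) (1, 0, -c) = 0 := (Prod.ext_iff.mp hDχ_DΦ).2
  have hsplit : ((1 : ℝ), (0 : ℝ), (0 : ℝ)) = (1, 0, -c) + c • (0, 0, 1) := by
    ext <;> simp
  have hG : HasFDerivAt (fun q => F (E q, L q))
      ((fderiv ℝ F (E p, L p)).comp ((fderiv ℝ E p).prod (fderiv ℝ L p))) p :=
    hF.differentiableAt.hasFDerivAt.comp p hEL
  rw [hG.fderiv, hsplit, map_add, map_smul,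
    ContinuousLinearMap.comp_apply, hker, map_zero, zero_add, smul_eq_mul]

/-- In the `(R,y,z)` coordinates determined by the constraints
`ω(E,L) = y` and `E - Ψ(L,R) = z`, with `Ψ(L,R) = U(R) - M/R + L/(2R²)` and
`∇ω ≠ 0`, any function `G(R,y,z) = F(E(R,y,z), L(R,y,z))` of the energy-momentum
variables alone satisfies `∂_R G = ∂_RΨ(L,R) · ∂_z G`, where
`∂_RΨ(L,R) = U'(R) + M/R² - L/R³`. -/
theorem dR_dz_derivatives_parallel (M : ℝ) (hM : 0 < M) (U U' : ℝ → ℝ)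
    (hU : ∀ r > 0, HasDerivAt U (U' r) r)
    (ω : ℝ × ℝ → ℝ) (hω : Differentiable ℝ ω)
    (O : Set (ℝ × ℝ × ℝ)) (hO : IsOpen O) (hpos : ∀ p ∈ O, 0 < p.1)
    (E L : ℝ × ℝ × ℝ → ℝ)
    (hE : ∀ p ∈ O, DifferentiableAt ℝ E p) (hL : ∀ p ∈ O, DifferentiableAt ℝ L p)
    (hc₁ : ∀ p ∈ O, ω (E p, L p) = p.2.1)
    (hc₂ : ∀ p ∈ O, E p - (U p.1 - M / p.1 + L p / (2 * p.1 ^ 2)) = p.2.2)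
    (hgrad : ∀ p ∈ O, fderiv ℝ ω (E p, L p) ≠ 0) :
    ∀ F : ℝ × ℝ → ℝ, Differentiable ℝ F → ∀ p ∈ O,
      fderiv ℝ (fun q => F (E q, L q)) p (1, 0, 0) =
        (U' p.1 + M / p.1 ^ 2 - L p / p.1 ^ 3) *
          fderiv ℝ (fun q => F (E q, L q)) p (0, 0, 1) :=
  dR_dz_derivatives_parallel_general M U U' hU ω hω O hO hpos E L hE hL hc₁ hc₂
end
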